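/- arXiv:1008.4703 — 5 statements merged into one kernel-verified Lean document; each statement's English description precedes it below -/
import Mathlib

section
/- For every x ∈ M the matrix ψ(x) is unitary and satisfies det(I − ψ(x)) ≠ 0, and ψ is a bijection from M onto the open subset {U ∈ U(2) : det(I − U) ≠ 0}; the inverse is given by U ↦ φ⁻¹(X) with X = i(I + U)(I − U)⁻¹, which is a Hermitian matrix. -/
noncomputable section

open Matrix Complex

abbrev Mat2 := Matrix (Fin 2) (Fin 2) ℂ

/-- Minkowski quadratic form on ℝ⁴. -/
def mq (x : Fin 4 → ℝ) : ℝ := -(x 0)^2 + (x 1)^2 + (x 2)^2 + (x 3)^2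

/-- The isomorphism of Minkowski space with Hermitian 2×2 matrices. -/
def mphi (x : Fin 4 → ℝ) : Mat2 :=
  !![(x 0 : ℂ) + (x 3 : ℂ), (x 1 : ℂ) - Complex.I * (x 2 : ℂ);
     (x 1 : ℂ) + Complex.I * (x 2 : ℂ), (x 0 : ℂ) - (x 3 : ℂ)]

/-- The Cayley transform. -/
def cayley (X : Mat2) : Mat2 := (X - Complex.I • 1) * (X + Complex.I • 1)⁻¹

/-- ψ = u ∘ φ : M → U(2). -/
def mpsi (x : Fin 4 → ℝ) : Mat2 := cayley (mphi x)

/-- The inverse of φ, reading off the Minkowski coordinates of a Hermitian matrix. -/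
def mphiInv (X : Mat2) : Fin 4 → ℝ :=
  ![((X 0 0).re + (X 1 1).re)/2, (X 1 0).re, (X 1 0).im, ((X 0 0).re - (X 1 1).re)/2]

/-! ### Auxiliary lemmas -/

lemma smul_one_inv {c : ℂ} (hc : c ≠ 0) : ((c • 1 : Mat2))⁻¹ = c⁻¹ • 1 := by
  apply Matrix.inv_eq_right_inv
  rw [smul_mul_assoc, mul_smul_comm, smul_smul, mul_inv_cancel₀ hc, one_mul, one_smul]

lemma smulMatInv {c : ℂ} (hc : c ≠ 0) {B : Mat2} (hB : IsUnit B.det) :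
    ((c • B⁻¹))⁻¹ = c⁻¹ • B := by
  apply Matrix.inv_eq_right_inv
  rw [smul_mul_assoc, mul_smul_comm, smul_smul, mul_inv_cancel₀ hc,
    Matrix.nonsing_inv_mul _ hB, one_smul]

lemma cayley_props {X : Mat2} (hX : X.IsHermitian) (hA : IsUnit (X + Complex.I • 1).det) :
    (cayley X) * (cayley X)ᴴ = 1 ∧ (1 - cayley X).det ≠ 0 ∧
    Complex.I • ((1 + cayley X) * (1 - cayley X)⁻¹) = X := by
  set A := X + Complex.I • 1 with hAdef
  have hAH : Aᴴ = X - Complex.I • 1 := by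
    rw [hAdef, Matrix.conjTranspose_add, hX.eq, Matrix.conjTranspose_smul,
      Matrix.conjTranspose_one, Complex.star_def, Complex.conj_I, neg_smul, ← sub_eq_add_neg]
  have hc : cayley X = Aᴴ * A⁻¹ := by rw [cayley, hAH]
  have hAHdet : IsUnit Aᴴ.det := by rw [Matrix.det_conjTranspose]; exact hA.star
  have comm : A * Aᴴ = Aᴴ * A := by
    rw [hAH, hAdef]
    simp only [Matrix.mul_sub, Matrix.sub_mul, Matrix.mul_add, Matrix.add_mul,
      mul_smul_comm, smul_mul_assoc, mul_one, one_mul, smul_add, smul_sub]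
    abel
  have hu : cayley X * (cayley X)ᴴ = 1 := by
    rw [hc, Matrix.conjTranspose_mul, Matrix.conjTranspose_nonsing_inv,
      Matrix.conjTranspose_conjTranspose]
    calc Aᴴ * A⁻¹ * (Aᴴ⁻¹ * A) = Aᴴ * (A⁻¹ * Aᴴ⁻¹) * A := by simp only [mul_assoc]
      _ = Aᴴ * (Aᴴ⁻¹ * A⁻¹) * A := by rw [← Matrix.mul_inv_rev, ← comm, Matrix.mul_inv_rev]
      _ = (Aᴴ * Aᴴ⁻¹) * (A⁻¹ * A) := by simp only [mul_assoc]
      _ = 1 := by rw [Matrix.mul_nonsing_inv _ hAHdet, Matrix.nonsing_inv_mul _ hA, one_mul]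
  have hsub : A - Aᴴ = (2 * Complex.I) • (1 : Mat2) := by
    rw [hAH, hAdef]; module
  have hadd : A + Aᴴ = (2:ℂ) • X := by
    rw [hAH, hAdef]; module
  have h1u : 1 - cayley X = ((2 * Complex.I) • 1) * A⁻¹ := by
    rw [hc, ← hsub, Matrix.sub_mul, Matrix.mul_nonsing_inv _ hA]
  have h2u : 1 + cayley X = ((2:ℂ) • X) * A⁻¹ := by
    rw [hc, ← hadd, Matrix.add_mul, Matrix.mul_nonsing_inv _ hA]
  have hdet1u : (1 - cayley X).det ≠ 0 := by
    rw [h1u, Matrix.det_mul, Matrix.det_smul, Matrix.det_one, Matrix.det_nonsing_inv,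
      Ring.inverse_eq_inv]
    exact mul_ne_zero (by simp [Complex.I_ne_zero]) (inv_ne_zero hA.ne_zero)
  refine ⟨hu, hdet1u, ?_⟩
  rw [h1u, h2u, Matrix.mul_inv_rev, smul_one_inv (by simp [Complex.I_ne_zero] : (2*Complex.I : ℂ) ≠ 0),
    Matrix.nonsing_inv_nonsing_inv _ hA]
  calc Complex.I • ((2:ℂ) • X * A⁻¹ * (A * ((2*Complex.I)⁻¹ • 1)))
      = Complex.I • ((2:ℂ) • X * (A⁻¹ * A) * ((2*Complex.I)⁻¹ • 1)) := by simp only [mul_assoc]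
    _ = (Complex.I * (2*Complex.I)⁻¹ * 2) • X := by
        rw [Matrix.nonsing_inv_mul _ hA, mul_one, mul_smul_comm, smul_mul_assoc, mul_one,
          smul_smul, smul_smul]
    _ = X := by
        have h1 : (Complex.I * (2*Complex.I)⁻¹ * 2 : ℂ) = 1 := by
          field_simp
        rw [h1, one_smul]

lemma cayley_inv {U : Mat2} (hU : Uᴴ * U = 1) (hdet : (1 - U).det ≠ 0) :
    (Complex.I • ((1 + U) * (1 - U)⁻¹)).IsHermitian ∧
    IsUnit ((Complex.I • ((1 + U) * (1 - U)⁻¹)) + Complex.I • 1).det ∧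
    cayley (Complex.I • ((1 + U) * (1 - U)⁻¹)) = U := by
  set B := (1 : Mat2) - U with hBdef
  set X := Complex.I • ((1 + U) * B⁻¹) with hXdef
  have hB : IsUnit B.det := isUnit_iff_ne_zero.mpr hdet
  have hBH : Bᴴ = 1 - Uᴴ := by rw [hBdef, Matrix.conjTranspose_sub, Matrix.conjTranspose_one]
  have hBHdet : IsUnit Bᴴ.det := by rw [Matrix.det_conjTranspose]; exact hB.star
  have key : (1 + Uᴴ) * B = -(Bᴴ * (1 + U)) := by
    rw [hBH, hBdef]
    simp only [Matrix.add_mul, Matrix.mul_add, Matrix.sub_mul, Matrix.mul_sub,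
      one_mul, mul_one, hU, neg_sub]
    abel
  have herm : X.IsHermitian := by
    have h1 : (1 + Uᴴ : Mat2) = -(Bᴴ * (1 + U)) * B⁻¹ := by
      rw [← key, mul_assoc, Matrix.mul_nonsing_inv _ hB, mul_one]
    have h2 : (Bᴴ)⁻¹ * (1 + Uᴴ) = -((1 + U) * B⁻¹) := by
      rw [h1, neg_mul, mul_neg, ← mul_assoc, ← mul_assoc, Matrix.nonsing_inv_mul _ hBHdet, one_mul]
    show Xᴴ = X
    rw [hXdef, Matrix.conjTranspose_smul, Matrix.conjTranspose_mul,
      Matrix.conjTranspose_nonsing_inv, Matrix.conjTranspose_add,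
      Matrix.conjTranspose_one, Complex.star_def, Complex.conj_I, h2]
    rw [neg_smul, smul_neg, neg_neg]
  have hXp : X + Complex.I • 1 = (Complex.I * 2) • B⁻¹ := by
    rw [hXdef]
    have h3 : (Complex.I • (1:Mat2)) = Complex.I • (B * B⁻¹) := by
      rw [Matrix.mul_nonsing_inv _ hB]
    rw [h3, ← smul_add, ← Matrix.add_mul,
      show (1 + U) + B = (2:ℂ) • (1:Mat2) from by rw [hBdef]; module,
      smul_mul_assoc, one_mul, smul_smul]
  have hXm : X - Complex.I • 1 = (Complex.I * 2) • (U * B⁻¹) := by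
    rw [hXdef]
    have h3 : (Complex.I • (1:Mat2)) = Complex.I • (B * B⁻¹) := by
      rw [Matrix.mul_nonsing_inv _ hB]
    rw [h3, ← smul_sub, ← Matrix.sub_mul,
      show (1 + U) - B = (2:ℂ) • U from by rw [hBdef]; module,
      smul_mul_assoc, smul_smul]
  have hI2 : (Complex.I * 2 : ℂ) ≠ 0 := by simp [Complex.I_ne_zero]
  have hdetXp : IsUnit (X + Complex.I • 1).det := by
    rw [hXp, Matrix.det_smul, Matrix.det_nonsing_inv, Ring.inverse_eq_inv]
    exact isUnit_iff_ne_zero.mpr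
      (mul_ne_zero (by simp [Complex.I_ne_zero]) (inv_ne_zero hB.ne_zero))
  refine ⟨herm, hdetXp, ?_⟩
  rw [cayley, hXp, hXm, smulMatInv hI2 hB, smul_mul_assoc, mul_smul_comm, smul_smul,
    mul_inv_cancel₀ hI2, mul_assoc, Matrix.nonsing_inv_mul _ hB, mul_one, one_smul]

lemma mphi_herm (x : Fin 4 → ℝ) : (mphi x).IsHermitian := by
  show (mphi x)ᴴ = mphi x
  ext i j
  fin_cases i <;> fin_cases j <;>
    simp [mphi, Matrix.conjTranspose_apply, Complex.ext_iff]

lemma mphi_det_ne (x : Fin 4 → ℝ) : IsUnit (mphi x + Complex.I • 1).det := by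
  rw [isUnit_iff_ne_zero]
  have hd : (mphi x + Complex.I • 1).det =
      (((x 0)^2 - (x 1)^2 - (x 2)^2 - (x 3)^2 - 1 : ℝ) : ℂ) + (2 * x 0 : ℝ) * Complex.I := by
    simp [Matrix.det_fin_two, mphi, Matrix.smul_apply, Matrix.one_apply, Complex.ext_iff,
      ← Complex.ofReal_pow]
    constructor <;> ring
  rw [hd]
  intro h
  rw [Complex.ext_iff] at h
  simp [← Complex.ofReal_pow] at h
  obtain ⟨h1, h2⟩ := h
  nlinarith [sq_nonneg (x 1), sq_nonneg (x 2), sq_nonneg (x 3)]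

lemma mphiInv_mphi (x : Fin 4 → ℝ) : mphiInv (mphi x) = x := by
  funext i
  fin_cases i <;> simp [mphi, mphiInv]

lemma mphi_mphiInv {X : Mat2} (hX : X.IsHermitian) : mphi (mphiInv X) = X := by
  have h00 : (X 0 0).im = 0 := by
    have := congrFun (congrFun hX.eq 0) 0
    rw [Matrix.conjTranspose_apply] at this
    simp [Complex.ext_iff] at this
    linarith
  have h11 : (X 1 1).im = 0 := by
    have := congrFun (congrFun hX.eq 1) 1
    rw [Matrix.conjTranspose_apply] at this
    simp [Complex.ext_iff] at this
    linarith
  have h01 : X 0 1 = starRingEnd ℂ (X 1 0) := by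
    have := congrFun (congrFun hX.eq 0) 1
    rw [Matrix.conjTranspose_apply] at this
    exact this.symm
  ext i j
  fin_cases i <;> fin_cases j <;>
    simp [mphi, mphiInv, h01, Complex.ext_iff, h00, h11] <;> ring

theorem stmt0 :
    (∀ x : Fin 4 → ℝ, mpsi x ∈ Matrix.unitaryGroup (Fin 2) ℂ ∧ (1 - mpsi x).det ≠ 0) ∧
    Set.BijOn mpsi Set.univ
      {U : Mat2 | U ∈ Matrix.unitaryGroup (Fin 2) ℂ ∧ (1 - U).det ≠ 0} ∧
    (∀ U : Mat2, U ∈ Matrix.unitaryGroup (Fin 2) ℂ → (1 - U).det ≠ 0 →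
      (Complex.I • ((1 + U) * (1 - U)⁻¹)).IsHermitian ∧
      mpsi (mphiInv (Complex.I • ((1 + U) * (1 - U)⁻¹))) = U) := by
  have part1 : ∀ x : Fin 4 → ℝ,
      mpsi x ∈ Matrix.unitaryGroup (Fin 2) ℂ ∧ (1 - mpsi x).det ≠ 0 := by
    intro x
    obtain ⟨h1, h2, _⟩ := cayley_props (mphi_herm x) (mphi_det_ne x)
    exact ⟨Matrix.mem_unitaryGroup_iff.mpr h1, h2⟩
  have part3 : ∀ U : Mat2, U ∈ Matrix.unitaryGroup (Fin 2) ℂ → (1 - U).det ≠ 0 →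
      (Complex.I • ((1 + U) * (1 - U)⁻¹)).IsHermitian ∧
      mpsi (mphiInv (Complex.I • ((1 + U) * (1 - U)⁻¹))) = U := by
    intro U hU hdet
    have hU' : Uᴴ * U = 1 := Matrix.mem_unitaryGroup_iff'.mp hU
    obtain ⟨herm, _, hcay⟩ := cayley_inv hU' hdet
    refine ⟨herm, ?_⟩
    rw [mpsi, mphi_mphiInv herm, hcay]
  refine ⟨part1, ⟨?_, ?_, ?_⟩, part3⟩
  · intro x _
    exact part1 x
  · intro x _ y _ hxy
    have hx := (cayley_props (mphi_herm x) (mphi_det_ne x)).2.2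
    have hy := (cayley_props (mphi_herm y) (mphi_det_ne y)).2.2
    have : mphi x = mphi y := by
      rw [← hx, ← hy]
      show Complex.I • ((1 + mpsi x) * (1 - mpsi x)⁻¹) =
        Complex.I • ((1 + mpsi y) * (1 - mpsi y)⁻¹)
      rw [hxy]
    calc x = mphiInv (mphi x) := (mphiInv_mphi x).symm
      _ = mphiInv (mphi y) := by rw [this]
      _ = y := mphiInv_mphi y
  · intro U hU
    obtain ⟨hU1, hU2⟩ := hU
    exact ⟨mphiInv (Complex.I • ((1 + U) * (1 - U)⁻¹)), Set.mem_univ _,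
      (part3 U hU1 hU2).2⟩
end
end

section
/- For every x ∈ M one has 1 + q(x) − 2i x⁰ ≠ 0, and setting U = ψ(x): det(I − U) = 4/(1 + q(x) − 2i x⁰) and det(I + U) = 4 q(x)/(1 + q(x) − 2i x⁰). In particular det(I − U) ≠ 0 for all x ∈ M, and det(I + U) = 0 if and only if q(x) = 0. -/
noncomputable section

open Matrix Complex

theorem stmt1 (x : Fin 4 → ℝ) :
    ((1 : ℂ) + (mq x : ℂ) - 2 * Complex.I * (x 0 : ℂ)) ≠ 0 ∧
    (1 - mpsi x).det = 4 / ((1 : ℂ) + (mq x : ℂ) - 2 * Complex.I * (x 0 : ℂ)) ∧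
    (1 + mpsi x).det = 4 * (mq x : ℂ) / ((1 : ℂ) + (mq x : ℂ) - 2 * Complex.I * (x 0 : ℂ)) ∧
    (1 - mpsi x).det ≠ 0 ∧
    ((1 + mpsi x).det = 0 ↔ mq x = 0) := by
  set d : ℂ := (1 : ℂ) + (mq x : ℂ) - 2 * Complex.I * (x 0 : ℂ) with hd
  -- d ≠ 0
  have hdre : d.re = 1 + mq x := by
    simp [hd, Complex.add_re, Complex.sub_re, Complex.mul_re]
  have hdim : d.im = -(2 * x 0) := by
    simp [hd, Complex.add_im, Complex.sub_im, Complex.mul_im]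
  have ha : d ≠ 0 := by
    intro h
    have h1 : (1 : ℝ) + mq x = 0 := by rw [← hdre, h]; simp
    have h2 : -(2 * x 0) = 0 := by rw [← hdim, h]; simp
    have hx0 : x 0 = 0 := by linarith
    have : mq x = (x 1)^2 + (x 2)^2 + (x 3)^2 := by simp [mq, hx0]
    nlinarith [sq_nonneg (x 1), sq_nonneg (x 2), sq_nonneg (x 3)]
  set X : Mat2 := mphi x with hX
  set B : Mat2 := X + Complex.I • 1 with hB
  have hBent : B = !![(x 0 : ℂ) + (x 3 : ℂ) + Complex.I, (x 1 : ℂ) - Complex.I * (x 2 : ℂ);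
      (x 1 : ℂ) + Complex.I * (x 2 : ℂ), (x 0 : ℂ) - (x 3 : ℂ) + Complex.I] := by
    rw [hB, hX, mphi]
    ext i j
    fin_cases i <;> fin_cases j <;> simp [Matrix.one_apply]
  have hdetB : B.det = -d := by
    rw [hBent, Matrix.det_fin_two_of, hd]
    push_cast [mq]
    ring_nf
    rw [Complex.I_sq]
    ring
  have hdetBne : B.det ≠ 0 := by rw [hdetB]; simpa using ha
  have hu : IsUnit B.det := isUnit_iff_ne_zero.mpr hdetBne
  have hBBinv : B * B⁻¹ = 1 := Matrix.mul_nonsing_inv B hu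
  have hdetBinv : (B⁻¹).det = (B.det)⁻¹ := by
    rw [Matrix.det_nonsing_inv, Ring.inverse_eq_inv']
  have hdetX : X.det = -(mq x : ℂ) := by
    rw [hX, mphi, Matrix.det_fin_two_of]
    push_cast [mq]
    ring_nf
    rw [Complex.I_sq]
    ring
  have hpsi : mpsi x = (X - Complex.I • 1) * B⁻¹ := rfl
  have e1 : (1 : Mat2) - mpsi x = ((2 * Complex.I) • (1 : Mat2)) * B⁻¹ := by
    have : ((2 * Complex.I) • (1 : Mat2)) = B - (X - Complex.I • 1) := by
      rw [hB]; module
    rw [this, Matrix.sub_mul, hBBinv, hpsi]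
  have e2 : (1 : Mat2) + mpsi x = ((2 : ℂ) • X) * B⁻¹ := by
    have : ((2 : ℂ) • X) = B + (X - Complex.I • 1) := by
      rw [hB]; module
    rw [this, Matrix.add_mul, hBBinv, hpsi]
  have hdet1 : (1 - mpsi x).det = 4 / d := by
    rw [e1, Matrix.det_mul, Matrix.det_smul, hdetBinv, hdetB]
    simp only [Matrix.det_one, Fintype.card_fin, mul_one]
    rw [mul_pow, Complex.I_sq]
    field_simp
    ring
  have hdet2 : (1 + mpsi x).det = 4 * (mq x : ℂ) / d := by
    rw [e2, Matrix.det_mul, Matrix.det_smul, hdetBinv, hdetB, hdetX]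
    simp only [Fintype.card_fin]
    rw [inv_neg, div_eq_mul_inv]
    ring
  refine ⟨ha, hdet1, hdet2, ?_, ?_⟩
  · rw [hdet1]
    exact div_ne_zero (by norm_num) ha
  · rw [hdet2, div_eq_zero_iff, or_iff_left ha, mul_eq_zero]
    constructor
    · rintro (h4 | h0)
      · norm_num at h4
      · exact_mod_cast h0
    · intro h
      right
      exact_mod_cast h
end
end

section
/- If x ∈ M satisfies 1 − q(x) − 2x⁰ ≠ 0, then i·ψ(x) = ψ(x′), where x′ ∈ M is given by x′⁰ = (1 + q(x))/(1 − q(x) − 2x⁰) and (x′¹, x′², x′³) = (2x¹, 2x², 2x³)/(1 − q(x) − 2x⁰). Thus the left translation U ↦ iU of U(2) corresponds, on Minkowski space, to this explicit (conformal) transformation. -/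
noncomputable section

open Matrix Complex

/-!
Multiplying by `i` on `U(2)` is a Möbius map in the Cayley picture: `i • u(X) = u(Y)` as soon as
`Y (1 - X) = 1 + X`, because then `(Y ± i)(1 - X) = (1 ∓ i)(X ± i)` and `(1 + i)/(1 - i) = i`.
For `X = φ(x)` Cayley–Hamilton gives `X² = 2x⁰ X + q(x)`, and `φ(x') = (2X + c)/D` with
`c = 1 + q(x) - 2x⁰` and `D = 1 - q(x) - 2x⁰`; expanding with `X²` eliminated,
`(2X + c)(1 - X) = D(1 + X)`.
-/

theorem I_smul_cayley_eq_cayley_of_mul_one_sub_eq {X Y : Mat2} (hX : IsUnit (X + I • 1).det)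
    (hY : Y * (1 - X) = 1 + X) : I • cayley X = cayley Y := by
  have h1I : (1 - I : ℂ) ≠ 0 := by
    intro h; simpa using congrArg Complex.im h
  have hplus : (Y + I • 1) * (1 - X) = (1 - I) • (X + I • 1) := by
    rw [add_mul, hY, smul_mul_assoc, one_mul]
    match_scalars
    · linear_combination I_sq
    · ring
  have hminus : (Y - I • 1) * (1 - X) = (1 + I) • (X - I • 1) := by
    rw [sub_mul, hY, smul_mul_assoc, one_mul]
    match_scalars
    · linear_combination I_sq
    · ring
  have hinv : (Y + I • 1)⁻¹ = (1 - I)⁻¹ • ((1 - X) * (X + I • 1)⁻¹) := by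
    refine Matrix.inv_eq_right_inv ?_
    rw [mul_smul_comm, ← Matrix.mul_assoc, hplus, smul_mul_assoc, smul_smul,
      inv_mul_cancel₀ h1I, one_smul, Matrix.mul_nonsing_inv _ hX]
  have hscalar : (1 - I)⁻¹ * (1 + I) = I := by
    field_simp; linear_combination I_sq
  rw [cayley, cayley, hinv, mul_smul_comm, ← Matrix.mul_assoc, hminus, smul_mul_assoc, smul_smul,
    hscalar]

theorem mphi_mul_self (x : Fin 4 → ℝ) :
    mphi x * mphi x = (2 * x 0 : ℂ) • mphi x + (mq x : ℂ) • 1 := by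
  ext i j
  fin_cases i <;> fin_cases j <;>
    simp [mphi, mq, Matrix.mul_apply, Fin.sum_univ_two, Complex.ext_iff, sq] <;> constructor <;> ring

theorem det_mphi_add_smul_one (x : Fin 4 → ℝ) (t : ℂ) :
    (mphi x + t • 1).det = t ^ 2 + 2 * t * x 0 - mq x := by
  simp only [mphi, one_fin_two, smul_of, smul_cons, smul_eq_mul, mul_one, mul_zero, smul_empty,
    of_add_of, add_cons, head_cons, tail_cons, add_zero, empty_add_empty, det_fin_two, of_apply,
    cons_val', cons_val_zero, cons_val_fin_one, cons_val_one, mq, ofReal_add, ofReal_neg, ofReal_pow]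
  linear_combination (x 2 : ℂ) ^ 2 * I_sq

theorem isUnit_det_mphi_add_I (x : Fin 4 → ℝ) : IsUnit (mphi x + I • 1).det := by
  rw [isUnit_iff_ne_zero, det_mphi_add_smul_one]
  intro h
  have hre : -1 - mq x = 0 := by simpa [sq] using congrArg Complex.re h
  have him : 2 * x 0 = 0 := by simpa using congrArg Complex.im h
  unfold mq at hre
  nlinarith [sq_nonneg (x 1), sq_nonneg (x 2), sq_nonneg (x 3)]

theorem mphi_mul_one_sub_mphi (x : Fin 4 → ℝ) (h : 1 - mq x - 2 * x 0 ≠ 0) :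
    mphi ![(1 + mq x) / (1 - mq x - 2 * x 0),
           2 * x 1 / (1 - mq x - 2 * x 0),
           2 * x 2 / (1 - mq x - 2 * x 0),
           2 * x 3 / (1 - mq x - 2 * x 0)] * (1 - mphi x) = 1 + mphi x := by
  set D := 1 - mq x - 2 * x 0 with hD
  have hDc : (D : ℂ) ≠ 0 := by exact_mod_cast h
  have hx' : mphi ![(1 + mq x) / D, 2 * x 1 / D, 2 * x 2 / D, 2 * x 3 / D] =
      (D : ℂ)⁻¹ • ((2 : ℂ) • mphi x + ((1 + mq x - 2 * x 0 : ℝ) : ℂ) • 1) := by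
    ext i j
    fin_cases i <;> fin_cases j <;> simp [mphi] <;> field_simp <;> ring
  rw [hx', smul_mul_assoc, add_mul, smul_mul_assoc, smul_mul_assoc, one_mul, mul_sub, mul_one,
    mphi_mul_self]
  match_scalars <;> field_simp <;> push_cast [hD] <;> ring

theorem stmt4 (x : Fin 4 → ℝ) (h : 1 - mq x - 2 * x 0 ≠ 0) :
    Complex.I • mpsi x =
      mpsi ![(1 + mq x) / (1 - mq x - 2 * x 0),
             2 * x 1 / (1 - mq x - 2 * x 0),
             2 * x 2 / (1 - mq x - 2 * x 0),
             2 * x 3 / (1 - mq x - 2 * x 0)] :=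
  I_smul_cayley_eq_cayley_of_mul_one_sub_eq (isUnit_det_mphi_add_I x) (mphi_mul_one_sub_mphi x h)
end
end

section
/- Let R be an invertible Hermitian 2×2 complex matrix, and set R₊ = R + R⁻¹ and R₋ = R⁻¹ − R. Let U be a unitary 2×2 matrix with U² = I such that R₋U + R₊ is invertible. Then Z = R₊U + R₋ is invertible, (R₊U + R₋)(R₋U + R₊)⁻¹ = Z U Z⁻¹, and consequently U′ = (R₊U + R₋)(R₋U + R₊)⁻¹ satisfies (U′)² = I. Hence Lorentz boosts, acting by these fractional linear transformations, map the 2-sphere at infinity (unitaries with eigenvalues ±1) into itself. -/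
noncomputable section

open Matrix

theorem stmt8 (R U : Mat2) (hR : R.IsHermitian) (hRu : IsUnit R)
    (hU : U ∈ Matrix.unitaryGroup (Fin 2) ℂ) (hU2 : U * U = 1)
    (hinv : IsUnit ((R⁻¹ - R) * U + (R + R⁻¹))) :
    IsUnit ((R + R⁻¹) * U + (R⁻¹ - R)) ∧
    ((R + R⁻¹) * U + (R⁻¹ - R)) * ((R⁻¹ - R) * U + (R + R⁻¹))⁻¹ =
      ((R + R⁻¹) * U + (R⁻¹ - R)) * U * ((R + R⁻¹) * U + (R⁻¹ - R))⁻¹ ∧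
    (((R + R⁻¹) * U + (R⁻¹ - R)) * ((R⁻¹ - R) * U + (R + R⁻¹))⁻¹) *
      (((R + R⁻¹) * U + (R⁻¹ - R)) * ((R⁻¹ - R) * U + (R + R⁻¹))⁻¹) = 1 := by
  set Z := (R + R⁻¹) * U + (R⁻¹ - R) with hZdef
  set W := (R⁻¹ - R) * U + (R + R⁻¹) with hWdef
  have hUu : IsUnit U := ⟨⟨U, U, hU2, hU2⟩, rfl⟩
  have hUinv : U⁻¹ = U := Matrix.inv_eq_right_inv hU2
  have hZU : Z * U = W := by
    rw [hZdef, hWdef, add_mul, mul_assoc, hU2, mul_one]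
    noncomm_ring
  have hZ : IsUnit Z := by
    have : Z = W * U := by rw [← hZU, mul_assoc, hU2, mul_one]
    rw [this]; exact hinv.mul hUu
  have hWinv : W⁻¹ = U * Z⁻¹ := by
    rw [← hZU, Matrix.mul_inv_rev, hUinv]
  refine ⟨hZ, ?_, ?_⟩
  · rw [hWinv, ← mul_assoc]
  · have hZdet : IsUnit Z.det := (Matrix.isUnit_iff_isUnit_det Z).mp hZ
    rw [hWinv]
    calc Z * (U * Z⁻¹) * (Z * (U * Z⁻¹))
        = Z * U * (Z⁻¹ * Z) * U * Z⁻¹ := by noncomm_ring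
      _ = Z * (U * U) * Z⁻¹ := by rw [Matrix.nonsing_inv_mul Z hZdet]; noncomm_ring
      _ = 1 := by rw [hU2, mul_one, Matrix.mul_nonsing_inv Z hZdet]
end
end

section
/- Let J = diag(I₂, −I₂) (4×4) and let M = [[A,B],[C,D]] be a 4×4 complex matrix in 2×2 blocks satisfying M^* J M = J (i.e. M ∈ U(2,2), equivalently A^*A − C^*C = I, B^*B − D^*D = −I, A^*B − C^*D = 0). Then for every unitary 2×2 matrix U the matrix CU + D is invertible, and (AU + B)(CU + D)⁻¹ is unitary. Moreover this fractional linear assignment defines an action: for M, M′ ∈ U(2,2) the transformation associated to M·M′ is the composition of those associated to M and M′. -/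
noncomputable section

open Matrix

/-- 4×4 matrices over ℂ written in 2×2 blocks. -/
abbrev Mat22 := Matrix (Fin 2 ⊕ Fin 2) (Fin 2 ⊕ Fin 2) ℂ

/-- J = diag(I₂, −I₂). -/
def Jm : Mat22 := Matrix.fromBlocks 1 0 0 (-1)

/-- Membership in U(2,2): M^* J M = J. -/
def memU22 (M : Mat22) : Prop := Mᴴ * Jm * M = Jm

/-- The fractional linear transformation U ↦ (AU + B)(CU + D)⁻¹ associated with
a block matrix M = [[A,B],[C,D]]. -/
def fracAct (M : Mat22) (U : Mat2) : Mat2 :=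
  (M.toBlocks₁₁ * U + M.toBlocks₁₂) * (M.toBlocks₂₁ * U + M.toBlocks₂₂)⁻¹

/-! Write `X(U) = [U; 1]` (`graphMatrix U`), so that `M X(U) = [AU + B; CU + D]`.
Since `Mᴴ J M = J`, the form `Yᴴ J Y` is preserved:
`(AU+B)ᴴ(AU+B) - (CU+D)ᴴ(CU+D) = X(U)ᴴ J X(U) = Uᴴ U - 1 = 0`.
So a kernel vector `v` of `CU + D` is also killed by `AU + B`, hence
`J X(U) v = Mᴴ J M X(U) v = 0`, which forces `v = 0`; and the equality of the two Gram
matrices makes `(AU+B)(CU+D)⁻¹` unitary. For the action, `M' X(U) = X(U') (C'U + D')` where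
`U'` is the image of `U`, so `(M M') X(U) = M X(U') (C'U + D')` and the common right factor
cancels in the quotient. -/

def indefiniteForm (m n R : Type*) [Zero R] [One R] [Neg R] [DecidableEq m] [DecidableEq n] :
    Matrix (m ⊕ n) (m ⊕ n) R :=
  fromBlocks 1 0 0 (-1)

def graphMatrix {R m n : Type*} [Zero R] [One R] [DecidableEq n] (U : Matrix m n R) :
    Matrix (m ⊕ n) n R :=
  fromRows U 1

def fracNum {R m₁ m₂ n k : Type*} [Semiring R] [Fintype n]
    (M : Matrix (m₁ ⊕ m₂) (n ⊕ k) R) (U : Matrix n k R) : Matrix m₁ k R :=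
  M.toBlocks₁₁ * U + M.toBlocks₁₂

def fracDen {R m₁ m₂ n k : Type*} [Semiring R] [Fintype n]
    (M : Matrix (m₁ ⊕ m₂) (n ⊕ k) R) (U : Matrix n k R) : Matrix m₂ k R :=
  M.toBlocks₂₁ * U + M.toBlocks₂₂

theorem fracAct_eq_fracNum_mul_inv (M : Mat22) (U : Mat2) :
    fracAct M U = fracNum M U * (fracDen M U)⁻¹ :=
  rfl

theorem conjTranspose_fromRows_mul_indefiniteForm_mul_fromRows {R m₁ m₂ n : Type*} [Ring R]
    [StarRing R] [Fintype m₁] [Fintype m₂] [DecidableEq m₁] [DecidableEq m₂]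
    (P : Matrix m₁ n R) (Q : Matrix m₂ n R) :
    (fromRows P Q)ᴴ * indefiniteForm m₁ m₂ R * fromRows P Q = Pᴴ * P - Qᴴ * Q := by
  simp only [indefiniteForm, conjTranspose_fromRows_eq_fromCols_conjTranspose,
    fromCols_mul_fromBlocks, fromCols_mul_fromRows]
  simp [sub_eq_add_neg]

theorem mul_graphMatrix {R m₁ m₂ n k : Type*} [Semiring R] [Fintype n] [Fintype k]
    [DecidableEq k] (M : Matrix (m₁ ⊕ m₂) (n ⊕ k) R) (U : Matrix n k R) :
    M * graphMatrix U = fromRows (fracNum M U) (fracDen M U) := by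
  conv_lhs => rw [← fromBlocks_toBlocks M]
  simp only [graphMatrix, fromBlocks_mul_fromRows, Matrix.mul_one, fracNum, fracDen]

theorem mul_graphMatrix_eq_graphMatrix_mul {R m n k : Type*} [CommRing R] [Fintype n]
    [DecidableEq n] [Fintype k] (M : Matrix (m ⊕ n) (k ⊕ n) R) (U : Matrix k n R)
    (hQ : IsUnit (fracDen M U)) :
    M * graphMatrix U = graphMatrix (fracNum M U * (fracDen M U)⁻¹) * fracDen M U := by
  rw [mul_graphMatrix, graphMatrix, fromRows_mul, Matrix.one_mul,
    nonsing_inv_mul_cancel_right _ _ ((isUnit_iff_isUnit_det _).1 hQ)]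

theorem Matrix.mul_nonsing_inv_mem_unitaryGroup {α n : Type*} [CommRing α] [StarRing α]
    [Fintype n] [DecidableEq n] {P Q : Matrix n n α} (h : Pᴴ * P = Qᴴ * Q) (hQ : IsUnit Q) :
    P * Q⁻¹ ∈ unitaryGroup n α := by
  have hQdet : IsUnit Q.det := (isUnit_iff_isUnit_det Q).1 hQ
  have hQHdet : IsUnit Qᴴ.det := by rw [det_conjTranspose]; exact hQdet.star
  rw [mem_unitaryGroup_iff', star_eq_conjTranspose, conjTranspose_mul, conjTranspose_nonsing_inv]
  calc Qᴴ⁻¹ * Pᴴ * (P * Q⁻¹) = Qᴴ⁻¹ * (Pᴴ * P) * Q⁻¹ := by simp only [Matrix.mul_assoc]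
    _ = (Qᴴ⁻¹ * Qᴴ) * (Q * Q⁻¹) := by rw [h]; simp only [Matrix.mul_assoc]
    _ = 1 := by rw [nonsing_inv_mul _ hQHdet, mul_nonsing_inv _ hQdet, Matrix.one_mul]

section IndefiniteUnitary

open scoped ComplexOrder

variable {𝕜 n : Type*} [RCLike 𝕜] [Fintype n] [DecidableEq n]
  {M : Matrix (n ⊕ n) (n ⊕ n) 𝕜} {U : Matrix n n 𝕜}

theorem conjTranspose_mul_self_fracNum_eq
    (hM : Mᴴ * indefiniteForm n n 𝕜 * M = indefiniteForm n n 𝕜) (hU : U ∈ unitaryGroup n 𝕜) :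
    (fracNum M U)ᴴ * fracNum M U = (fracDen M U)ᴴ * fracDen M U := by
  rw [← sub_eq_zero, ← conjTranspose_fromRows_mul_indefiniteForm_mul_fromRows, ← mul_graphMatrix]
  calc (M * graphMatrix U)ᴴ * indefiniteForm n n 𝕜 * (M * graphMatrix U)
      = (graphMatrix U)ᴴ * (Mᴴ * indefiniteForm n n 𝕜 * M) * graphMatrix U := by
        simp only [conjTranspose_mul, Matrix.mul_assoc]
    _ = Uᴴ * U - 1ᴴ * 1 := by
        rw [hM, graphMatrix, conjTranspose_fromRows_mul_indefiniteForm_mul_fromRows]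
    _ = 0 := by rw [← star_eq_conjTranspose, (mem_unitaryGroup_iff' (A := U)).1 hU]; simp

theorem isUnit_fracDen
    (hM : Mᴴ * indefiniteForm n n 𝕜 * M = indefiniteForm n n 𝕜) (hU : U ∈ unitaryGroup n 𝕜) :
    IsUnit (fracDen M U) := by
  refine (isUnit_iff_isUnit_det _).2 (isUnit_iff_ne_zero.2 fun hdet => ?_)
  obtain ⟨v, hv, hQv⟩ := exists_mulVec_eq_zero_iff.2 hdet
  have hPv : fracNum M U *ᵥ v = 0 := by
    rw [← conjTranspose_mul_self_mulVec_eq_zero, conjTranspose_mul_self_fracNum_eq hM hU,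
      ← mulVec_mulVec, hQv, mulVec_zero]
  have hMXv : (M * graphMatrix U) *ᵥ v = 0 := by
    rw [mul_graphMatrix, fromRows_mulVec, hPv, hQv]
    ext (i | i) <;> rfl
  have hJXv : (indefiniteForm n n 𝕜 * graphMatrix U) *ᵥ v = 0 := by
    rw [← hM, Matrix.mul_assoc, ← mulVec_mulVec, hMXv, mulVec_zero]
  simp only [indefiniteForm, graphMatrix, fromBlocks_mul_fromRows, fromRows_mulVec] at hJXv
  exact hv (funext fun i => by simpa [neg_mulVec] using congrFun hJXv (Sum.inr i))

end IndefiniteUnitary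

theorem fracAct_mul {M M' : Mat22} {U : Mat2} (hQ' : IsUnit (fracDen M' U)) :
    fracAct (M * M') U = fracAct M (fracAct M' U) := by
  have h : fromRows (fracNum (M * M') U) (fracDen (M * M') U) =
      fromRows (fracNum M (fracAct M' U) * fracDen M' U)
        (fracDen M (fracAct M' U) * fracDen M' U) := by
    rw [← mul_graphMatrix, Matrix.mul_assoc, mul_graphMatrix_eq_graphMatrix_mul _ _ hQ',
      ← Matrix.mul_assoc, mul_graphMatrix, fromRows_mul, fracAct_eq_fracNum_mul_inv]
  obtain ⟨hnum, hden⟩ := fromRows_inj h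
  rw [fracAct_eq_fracNum_mul_inv, hnum, hden, Matrix.mul_inv_rev, Matrix.mul_assoc,
    mul_nonsing_inv_cancel_left _ _ ((isUnit_iff_isUnit_det _).1 hQ'),
    ← fracAct_eq_fracNum_mul_inv]

theorem stmt17 :
    (∀ M : Mat22, memU22 M → ∀ U ∈ Matrix.unitaryGroup (Fin 2) ℂ,
      IsUnit (M.toBlocks₂₁ * U + M.toBlocks₂₂) ∧
      fracAct M U ∈ Matrix.unitaryGroup (Fin 2) ℂ) ∧
    (∀ M M' : Mat22, memU22 M → memU22 M' →
      ∀ U ∈ Matrix.unitaryGroup (Fin 2) ℂ,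
        fracAct (M * M') U = fracAct M (fracAct M' U)) := by
  refine ⟨fun M hM U hU => ⟨isUnit_fracDen hM hU, ?_⟩,
    fun M M' _ hM' U hU => fracAct_mul (isUnit_fracDen hM' hU)⟩
  exact mul_nonsing_inv_mem_unitaryGroup (conjTranspose_mul_self_fracNum_eq hM hU)
    (isUnit_fracDen hM hU)
end
end
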